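/- arXiv:2009.05133 — 2 statements merged into one kernel-verified Lean document; each statement's English description precedes it below -/
import Mathlib

section
/- (Lemma 1, equivalence of the finite-alphabet problems.) Let H ∈ ℂ^{U×B}, κ > 0, u ∈ {1,…,U}, h_u^r the u-th row of H, and let S ⊆ ℂ^B be any set of nonzero vectors such that h_u^r a ≠ 0 for all a ∈ S (e.g., S a subset of X^B for a finite alphabet X ⊂ ℂ). Define G(a) = min over α ∈ ℂ of ( ‖e_u − α* H a‖₂² + κ |α|² ‖a‖₂² ) and R(a) = ( ‖H a‖₂² + κ ‖a‖₂² ) / |h_u^r a|². Then for all a, a' ∈ S, G(a) ≤ G(a') if and only if R(a) ≤ R(a'); consequently, a ∈ S minimizes G over S if and only if a minimizes R over S. -/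
open Matrix

/-- The per-column Wiener-filter objective evaluated at the structured column `a α*`:
`‖e_u − α* H a‖₂² + κ |α|² ‖a‖₂²`. -/
noncomputable def preObj (U B : ℕ) (H : Matrix (Fin U) (Fin B) ℂ) (κ : ℝ)
    (u : Fin U) (a : Fin B → ℂ) (α : ℂ) : ℝ :=
  (∑ i, ‖(Pi.single u 1 : Fin U → ℂ) i - (starRingEnd ℂ) α * H.mulVec a i‖ ^ 2)
    + κ * ‖α‖ ^ 2 * ∑ j, ‖a j‖ ^ 2

/-- `G(a)`: the minimum over `α ∈ ℂ` of the structured per-column objective. -/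
noncomputable def Gpre (U B : ℕ) (H : Matrix (Fin U) (Fin B) ℂ) (κ : ℝ)
    (u : Fin U) (a : Fin B → ℂ) : ℝ :=
  sInf (Set.range (preObj U B H κ u a))

/-- The ratio objective `R(a) = (‖H a‖₂² + κ ‖a‖₂²) / |h_uʳ a|²` of eq. (12). -/
noncomputable def Rpre (U B : ℕ) (H : Matrix (Fin U) (Fin B) ℂ) (κ : ℝ)
    (u : Fin U) (a : Fin B → ℂ) : ℝ :=
  ((∑ i, ‖H.mulVec a i‖ ^ 2) + κ * ∑ j, ‖a j‖ ^ 2) / ‖H.mulVec a u‖ ^ 2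

/-!
Expanding the square, the objective is the real quadratic `1 − 2 Re(ᾱ w) + |α|² D` in `α`,
where `w = (H a)_u` and `D = ‖H a‖² + κ ‖a‖²`. Completing the square,
`1 − |w|²/D + D |α − w/D|²`, shows that its minimum is `G(a) = 1 − |w|²/D = 1 − 1/R(a)`, and
`t ↦ 1 − 1/t` is strictly increasing for `t > 0`.
-/

open ComplexConjugate

lemma sum_norm_sq_single_sub_mul {ι : Type*} [Fintype ι] [DecidableEq ι] (u : ι) (c : ℂ)
    (v : ι → ℂ) :
    ∑ i, ‖(Pi.single u 1 : ι → ℂ) i - c * v i‖ ^ 2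
      = 1 - 2 * (c * v u).re + ‖c‖ ^ 2 * ∑ i, ‖v i‖ ^ 2 := by
  simp only [@norm_sub_sq ℂ ℂ, Finset.sum_add_distrib, Finset.sum_sub_distrib, norm_mul,
    mul_pow, ← Finset.mul_sum]
  simp [Pi.single_apply, RCLike.inner_apply, apply_ite, Finset.sum_ite_eq']

lemma quadratic_eq_add_norm_sub_sq (w α : ℂ) {D : ℝ} (hD : D ≠ 0) :
    1 - 2 * (conj α * w).re + ‖α‖ ^ 2 * D = 1 - ‖w‖ ^ 2 / D + D * ‖α - w / D‖ ^ 2 := by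
  simp only [Complex.sq_norm, Complex.normSq_apply, Complex.mul_re, Complex.conj_re,
    Complex.conj_im, Complex.sub_re, Complex.sub_im, Complex.div_ofReal_re,
    Complex.div_ofReal_im]
  field_simp
  ring

lemma isLeast_range_quadratic (w : ℂ) {D : ℝ} (hD : 0 < D) :
    IsLeast (Set.range fun α : ℂ => 1 - 2 * (conj α * w).re + ‖α‖ ^ 2 * D)
      (1 - ‖w‖ ^ 2 / D) := by
  refine ⟨⟨w / D, ?_⟩, ?_⟩
  · dsimp only
    rw [quadratic_eq_add_norm_sub_sq w _ hD.ne', sub_self, norm_zero]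
    ring
  · rintro _ ⟨α, rfl⟩
    dsimp only
    rw [quadratic_eq_add_norm_sub_sq w α hD.ne']
    have := mul_nonneg hD.le (sq_nonneg ‖α - w / D‖)
    linarith

section WienerObjective

variable {U B : ℕ} (H : Matrix (Fin U) (Fin B) ℂ) (κ : ℝ) (u : Fin U) (a : Fin B → ℂ)

lemma preObj_eq_quadratic (α : ℂ) :
    preObj U B H κ u a α = 1 - 2 * (conj α * (H *ᵥ a) u).re
      + ‖α‖ ^ 2 * ((∑ i, ‖(H *ᵥ a) i‖ ^ 2) + κ * ∑ j, ‖a j‖ ^ 2) := by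
  rw [preObj, sum_norm_sq_single_sub_mul, Complex.norm_conj]
  ring

lemma Gpre_eq (hD : 0 < (∑ i, ‖(H *ᵥ a) i‖ ^ 2) + κ * ∑ j, ‖a j‖ ^ 2) :
    Gpre U B H κ u a
      = 1 - ‖(H *ᵥ a) u‖ ^ 2 / ((∑ i, ‖(H *ᵥ a) i‖ ^ 2) + κ * ∑ j, ‖a j‖ ^ 2) := by
  rw [Gpre, funext (preObj_eq_quadratic H κ u a), (isLeast_range_quadratic _ hD).csInf_eq]

variable {κ}

lemma norm_mulVec_apply_sq_le (hκ : 0 ≤ κ) :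
    ‖(H *ᵥ a) u‖ ^ 2 ≤ (∑ i, ‖(H *ᵥ a) i‖ ^ 2) + κ * ∑ j, ‖a j‖ ^ 2 := by
  have hu := Finset.single_le_sum (fun i _ ↦ sq_nonneg ‖(H *ᵥ a) i‖) (Finset.mem_univ u)
  have hreg : 0 ≤ κ * ∑ j, ‖a j‖ ^ 2 := by positivity
  linarith

variable {u a}

lemma Rpre_pos (hκ : 0 ≤ κ) (hu : (H *ᵥ a) u ≠ 0) : 0 < Rpre U B H κ u a := by
  have hw : 0 < ‖(H *ᵥ a) u‖ ^ 2 := by positivity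
  exact div_pos (hw.trans_le (norm_mulVec_apply_sq_le H u a hκ)) hw

lemma Gpre_eq_one_sub_inv_Rpre (hκ : 0 ≤ κ) (hu : (H *ᵥ a) u ≠ 0) :
    Gpre U B H κ u a = 1 - (Rpre U B H κ u a)⁻¹ := by
  have hw : 0 < ‖(H *ᵥ a) u‖ ^ 2 := by positivity
  rw [Gpre_eq H κ u a (hw.trans_le (norm_mulVec_apply_sq_le H u a hκ)), Rpre, inv_div]

lemma Gpre_le_Gpre_iff {a' : Fin B → ℂ} (hκ : 0 ≤ κ) (hu : (H *ᵥ a) u ≠ 0)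
    (hu' : (H *ᵥ a') u ≠ 0) :
    Gpre U B H κ u a ≤ Gpre U B H κ u a' ↔ Rpre U B H κ u a ≤ Rpre U B H κ u a' := by
  rw [Gpre_eq_one_sub_inv_Rpre H hκ hu, Gpre_eq_one_sub_inv_Rpre H hκ hu', sub_le_sub_iff_left,
    inv_le_inv₀ (Rpre_pos H hκ hu') (Rpre_pos H hκ hu)]

end WienerObjective

theorem preFAWP_lemma1_equivalence_general (U B : ℕ) (H : Matrix (Fin U) (Fin B) ℂ)
    (κ : ℝ) (hκ : 0 < κ) (u : Fin U) (S : Set (Fin B → ℂ))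
    (hSh : ∀ a ∈ S, H.mulVec a u ≠ 0) :
    (∀ a ∈ S, ∀ a' ∈ S,
      (Gpre U B H κ u a ≤ Gpre U B H κ u a' ↔ Rpre U B H κ u a ≤ Rpre U B H κ u a')) ∧
    (∀ a ∈ S,
      ((∀ a' ∈ S, Gpre U B H κ u a ≤ Gpre U B H κ u a')
        ↔ (∀ a' ∈ S, Rpre U B H κ u a ≤ Rpre U B H κ u a'))) := by
  have hcmp : ∀ a ∈ S, ∀ a' ∈ S,
      (Gpre U B H κ u a ≤ Gpre U B H κ u a' ↔ Rpre U B H κ u a ≤ Rpre U B H κ u a') :=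
    fun a ha a' ha' ↦ Gpre_le_Gpre_iff H hκ.le (hSh a ha) (hSh a' ha')
  exact ⟨hcmp, fun a ha ↦ forall₂_congr fun a' ha' ↦ hcmp a ha a' ha'⟩

/-- Lemma 1, equivalence of the finite-alphabet problems: on any set `S`
of nonzero vectors with `h_uʳ a ≠ 0`, `G(a) ≤ G(a') ↔ R(a) ≤ R(a')`; consequently
`a` minimizes `G` over `S` iff it minimizes `R` over `S`. -/
theorem preFAWP_lemma1_equivalence (U B : ℕ) (H : Matrix (Fin U) (Fin B) ℂ)
    (κ : ℝ) (hκ : 0 < κ) (u : Fin U) (S : Set (Fin B → ℂ))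
    (hS0 : ∀ a ∈ S, a ≠ 0) (hSh : ∀ a ∈ S, H.mulVec a u ≠ 0) :
    (∀ a ∈ S, ∀ a' ∈ S,
      (Gpre U B H κ u a ≤ Gpre U B H κ u a' ↔ Rpre U B H κ u a ≤ Rpre U B H κ u a')) ∧
    (∀ a ∈ S,
      ((∀ a' ∈ S, Gpre U B H κ u a ≤ Gpre U B H κ u a')
        ↔ (∀ a' ∈ S, Rpre U B H κ u a ≤ Rpre U B H κ u a'))) :=
  preFAWP_lemma1_equivalence_general U B H κ hκ u S hSh
end

section
/- (Optimal value after substituting the optimal per-antenna scaling, part of Lemma 2.) Let H ∈ ℂ^{U×B}, κ > 0, b ∈ {1,…,B}, h_b the b-th column of H, and z ∈ ℂ^U nonzero. With ζ_b(z) = (h_b^H z)/(‖H^H z‖₂² + κ ‖z‖₂²), one has ‖e_b^H − ζ_b(z) z^H H‖₂² + κ |ζ_b(z)|² ‖z‖₂² = 1 − |h_b^H z|² / ( ‖H^H z‖₂² + κ ‖z‖₂² ). -/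
open Matrix

/-- The per-row Wiener-filter objective evaluated at the structured row `ζ zᴴ`:
`G(ζ) = ‖e_bᴴ − ζ zᴴ H‖₂² + κ |ζ|² ‖z‖₂²`, where `zᴴ H` is `vecMul (star z) H`. -/
noncomputable def postObj (U B : ℕ) (H : Matrix (Fin U) (Fin B) ℂ) (κ : ℝ)
    (b : Fin B) (z : Fin U → ℂ) (ζ : ℂ) : ℝ :=
  (∑ j, ‖(Pi.single b 1 : Fin B → ℂ) j - ζ * Matrix.vecMul (star z) H j‖ ^ 2)
    + κ * ‖ζ‖ ^ 2 * ∑ i, ‖z i‖ ^ 2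

/-- The optimal per-antenna scaling factor `ζ_b(z) = (h_bᴴ z)/(‖Hᴴ z‖₂² + κ ‖z‖₂²)`. -/
noncomputable def zetaOpt (U B : ℕ) (H : Matrix (Fin U) (Fin B) ℂ) (κ : ℝ)
    (b : Fin B) (z : Fin U → ℂ) : ℂ :=
  Hᴴ.mulVec z b / ((((∑ j, ‖Hᴴ.mulVec z j‖ ^ 2) + κ * ∑ i, ‖z i‖ ^ 2 : ℝ)) : ℂ)

/-!
Since `zᴴ H = (Hᴴ z)ᴴ`, the objective is the real quadratic
`G(ζ) = 1 - 2 Re(ζ̄ c) + |ζ|² D` with `c = h_bᴴ z = (Hᴴ z)_b` and `D = ‖Hᴴ z‖₂² + κ ‖z‖₂²`;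
at `ζ = c / D` the linear term is `-2 |c|² / D` and the quadratic one `|c|² / D`.
-/

theorem sum_norm_sq_single_sub_mul_conj {𝕜 ι : Type*} [RCLike 𝕜] [Fintype ι] [DecidableEq ι]
    (b : ι) (w : ι → 𝕜) (ζ : 𝕜) :
    ∑ j, ‖(Pi.single b 1 : ι → 𝕜) j - ζ * star (w j)‖ ^ 2
      = 1 - 2 * RCLike.re (star ζ * w b) + ‖ζ‖ ^ 2 * ∑ j, ‖w j‖ ^ 2 := by
  have hterm : ∀ j, ‖(Pi.single b 1 : ι → 𝕜) j - ζ * star (w j)‖ ^ 2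
      = ‖(Pi.single b 1 : ι → 𝕜) j‖ ^ 2 - 2 * RCLike.re ((Pi.single b (star ζ * w b) : ι → 𝕜) j)
        + ‖ζ‖ ^ 2 * ‖w j‖ ^ 2 := by
    intro j
    rw [← RCLike.normSq_eq_def', RCLike.normSq_sub, RCLike.normSq_eq_def', RCLike.normSq_eq_def',
      ← RCLike.star_def, star_mul', star_star, ← one_mul (star ζ * w b),
      Pi.single_mul_left_apply (f := fun k ↦ star ζ * w k), norm_mul, norm_star, mul_pow]
    ring
  have hsingle : ∑ j, ‖(Pi.single b 1 : ι → 𝕜) j‖ ^ 2 = 1 := by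
    simp [Pi.single_apply, apply_ite]
  simp only [hterm, Finset.sum_add_distrib, Finset.sum_sub_distrib, ← Finset.mul_sum,
    ← map_sum, Finset.sum_pi_single', Finset.mem_univ, if_true, hsingle]

theorem vecMul_star_eq_star_conjTranspose_mulVec {m n α : Type*} [Fintype m]
    [NonUnitalSemiring α] [StarRing α] (H : Matrix m n α) (z : m → α) :
    star z ᵥ* H = star (Hᴴ *ᵥ z) := by
  rw [star_mulVec, conjTranspose_conjTranspose]

theorem postObj_eq_quadratic (U B : ℕ) (H : Matrix (Fin U) (Fin B) ℂ) (κ : ℝ) (b : Fin B)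
    (z : Fin U → ℂ) (ζ : ℂ) :
    postObj U B H κ b z ζ = 1 - 2 * (star ζ * (Hᴴ *ᵥ z) b).re
      + ‖ζ‖ ^ 2 * ((∑ j, ‖(Hᴴ *ᵥ z) j‖ ^ 2) + κ * ∑ i, ‖z i‖ ^ 2) := by
  simp only [postObj, vecMul_star_eq_star_conjTranspose_mulVec, Pi.star_apply,
    sum_norm_sq_single_sub_mul_conj]
  simp only [RCLike.re_to_complex]
  ring

theorem one_sub_two_re_star_div_mul_add_norm_div_sq_mul {𝕜 : Type*} [RCLike 𝕜] (c : 𝕜) (D : ℝ) :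
    1 - 2 * RCLike.re (star (c / D) * c) + ‖c / D‖ ^ 2 * D = 1 - ‖c‖ ^ 2 / D := by
  rcases eq_or_ne D 0 with rfl | hD
  · simp
  have hre : RCLike.re (star (c / D) * c) = ‖c‖ ^ 2 / D := by
    rw [star_div₀, RCLike.star_def, RCLike.conj_ofReal, div_mul_eq_mul_div, mul_comm,
      RCLike.mul_conj, ← RCLike.ofReal_pow, ← RCLike.ofReal_div, RCLike.ofReal_re]
  rw [hre, norm_div, RCLike.norm_ofReal, div_pow, sq_abs]
  field_simp
  ring

theorem postFAWP_optimal_value_general (U B : ℕ) (H : Matrix (Fin U) (Fin B) ℂ)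
    (κ : ℝ) (b : Fin B) (z : Fin U → ℂ) :
    postObj U B H κ b z (zetaOpt U B H κ b z)
      = 1 - ‖Hᴴ.mulVec z b‖ ^ 2 / ((∑ j, ‖Hᴴ.mulVec z j‖ ^ 2) + κ * ∑ i, ‖z i‖ ^ 2) := by
  rw [postObj_eq_quadratic, zetaOpt]
  exact one_sub_two_re_star_div_mul_add_norm_div_sq_mul (𝕜 := ℂ) _ _

/-- optimal value after substituting the optimal per-antenna scaling,
part of Lemma 2: for `κ > 0` and nonzero `z`,
`‖e_bᴴ − ζ_b(z) zᴴ H‖₂² + κ |ζ_b(z)|² ‖z‖₂² = 1 − |h_bᴴ z|² / (‖Hᴴ z‖₂² + κ ‖z‖₂²)`. -/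
theorem postFAWP_optimal_value (U B : ℕ) (H : Matrix (Fin U) (Fin B) ℂ)
    (κ : ℝ) (hκ : 0 < κ) (b : Fin B) (z : Fin U → ℂ) (hz : z ≠ 0) :
    postObj U B H κ b z (zetaOpt U B H κ b z)
      = 1 - ‖Hᴴ.mulVec z b‖ ^ 2 / ((∑ j, ‖Hᴴ.mulVec z j‖ ^ 2) + κ * ∑ i, ‖z i‖ ^ 2) :=
  postFAWP_optimal_value_general U B H κ b z
end
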